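/- arXiv:1910.14630 — 6 statements merged into one kernel-verified Lean document; each statement's English description precedes it below -/
import Mathlib

section
/- If the averaging inequality holds for exponents (p,q), i.e. ‖A_N f‖_{ℓ^q} ≤ C · N^{-d(1/p-1/q)} ‖f‖_{ℓ^p} for all N and all finitely supported f, then for every λ with 0 < 1-λ < min{1, d(1/p-1/q)}, the fractional integral inequality ‖I_λ f‖_{ℓ^q} ≤ C' ‖f‖_{ℓ^p} holds for all finitely supported f, where C' depends only on C, λ, d, p, q. -/
open Finset

/-- ℓ^p norm (finite real exponent) of a function on ℤ. -/
noncomputable def lpNorm (p : ℝ) (f : ℤ → ℂ) : ℝ :=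
  (∑' x : ℤ, ‖f x‖ ^ p) ^ (1 / p)

/-- Averaging operator along a polynomial `P`. -/
noncomputable def avg (P : Polynomial ℤ) (N : ℕ) (f : ℤ → ℂ) (x : ℤ) : ℂ :=
  (N : ℂ)⁻¹ * ∑ k ∈ Finset.Icc (1 : ℤ) (N : ℤ), f (x + P.eval k)

/-- Fractional integral operator along a polynomial `P`. -/
noncomputable def frac (P : Polynomial ℤ) (lam : ℝ) (f : ℤ → ℂ) (x : ℤ) : ℂ :=
  ∑' k : ℕ, ((((k : ℝ) + 1) ^ (-lam) : ℝ) : ℂ) * f (x + P.eval ((k : ℤ) + 1))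


/-! Summation by parts against the kernel `G k = k ^ (-λ)`: as `G` decreases to `0`,
`I_λ f = ∑_N N (G N - G (N + 1)) A_N f` pointwise (at each `x` only finitely many `k` contribute,
since `P` is nonconstant and `f` finitely supported). The mean value theorem gives
`N (G N - G (N + 1)) ≤ λ N ^ (-λ)`, so Minkowski's inequality in `ℓ^q` and the bound on `A_N` give
`‖I_λ f‖_q ≤ |C| λ ∑_N N ^ (-λ - δ) ‖f‖_p` with `δ = d (1/p - 1/q)`, a convergent series
because `λ + δ > 1`. -/

open Filter Topology

theorem mul_rpow_neg_sub_rpow_neg_add_one_le {lam a : ℝ} (hlam : 0 ≤ lam) (ha : 0 < a) :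
    a * (a ^ (-lam) - (a + 1) ^ (-lam)) ≤ lam * a ^ (-lam) := by
  have hne : ∀ x ∈ Set.Icc a (a + 1), x ≠ 0 := fun x hx => (ha.trans_le hx.1).ne'
  obtain ⟨c, hc, hslope⟩ := exists_hasDerivAt_eq_slope (fun x : ℝ => x ^ (-lam))
    (fun x => -lam * x ^ (-lam - 1)) (lt_add_one a)
    (fun x hx => (Real.continuousAt_rpow_const x _ (Or.inl (hne x hx))).continuousWithinAt)
    (fun x hx => Real.hasDerivAt_rpow_const (Or.inl (hne x (Set.Ioo_subset_Icc_self hx))))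
  have hc_le : c ^ (-lam - 1) ≤ a ^ (-lam - 1) :=
    Real.rpow_le_rpow_of_nonpos ha hc.1.le (by linarith)
  have ha_pow : a * a ^ (-lam - 1) = a ^ (-lam) := by
    conv_rhs => rw [show -lam = 1 + (-lam - 1) by ring, Real.rpow_add ha, Real.rpow_one]
  rw [add_sub_cancel_left, div_one] at hslope
  rw [← ha_pow]
  nlinarith [mul_le_mul_of_nonneg_left hc_le hlam]

theorem Antitone.hasSum_sub_add_one {G : ℕ → ℝ} (hG : Antitone G)
    (h0 : Tendsto G atTop (𝓝 0)) : HasSum (fun n => G n - G (n + 1)) (G 0) := by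
  rw [hasSum_iff_tendsto_nat_of_nonneg (fun n => sub_nonneg.2 (hG n.le_succ))]
  simp only [Finset.sum_range_sub']
  simpa using tendsto_const_nhds.sub h0

/-- Summation by parts against a finitely supported sequence. -/
theorem hasSum_sub_smul_sum_range {E : Type*} [NormedAddCommGroup E] [NormedSpace ℝ E]
    {G : ℕ → ℝ} (hG : Antitone G) (h0 : Tendsto G atTop (𝓝 0)) {c : ℕ → E} {s : Finset ℕ}
    (hc : ∀ k ∉ s, c k = 0) :
    HasSum (fun N => (G N - G (N + 1)) • ∑ k ∈ range (N + 1), c k) (∑ k ∈ s, G k • c k) := by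
  have hterm : ∀ k, HasSum (fun N => if k ≤ N then (G N - G (N + 1)) • c k else 0) (G k • c k) := by
    intro k
    have htail := ((hG.comp_monotone (add_left_mono (a := k))).hasSum_sub_add_one
      (h0.comp (tendsto_add_atTop_nat k))).smul_const (c k)
    rw [← (add_left_injective k).hasSum_iff]
    · simpa [Function.comp_def, add_right_comm] using htail
    · rintro N hN
      rw [if_neg]
      exact fun hkN => hN ⟨N - k, Nat.sub_add_cancel hkN⟩
  refine (hasSum_sum fun k _ => hterm k).congr_fun fun N => ?_
  rw [Finset.smul_sum, ← Finset.sum_filter]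
  refine (Finset.sum_subset (fun k hk => ?_) fun k hk hks => ?_).symm
  · simpa [Nat.lt_succ_iff] using (Finset.mem_filter.1 hk).2
  · rw [hc k fun hs => hks (Finset.mem_filter.2 ⟨hs, by simpa [Nat.lt_succ_iff] using hk⟩),
      smul_zero]

theorem Polynomial.finite_setOf_eval_mem {R : Type*} [CommRing R] [IsDomain R] {P : Polynomial R}
    (hP : 0 < P.natDegree) {S : Set R} (hS : S.Finite) : {t | P.eval t ∈ S}.Finite := by
  refine hS.preimage' fun y _ => ?_
  have hne : P - Polynomial.C y ≠ 0 := fun h => by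
    simp [sub_eq_zero.1 h] at hP
  simpa [sub_eq_zero, Set.preimage] using Polynomial.finite_setOfPred_isRoot hne

theorem lpNorm_nonneg (p : ℝ) (f : ℤ → ℂ) : 0 ≤ lpNorm p f :=
  Real.rpow_nonneg (tsum_nonneg fun _ => Real.rpow_nonneg (norm_nonneg _) _) _

theorem lpNorm_const_smul {q : ℝ} (hq : 0 < q) (c : ℂ) (f : ℤ → ℂ) :
    lpNorm q (c • f) = ‖c‖ * lpNorm q f := by
  simp only [lpNorm, Pi.smul_apply, smul_eq_mul, norm_mul]
  simp_rw [Real.mul_rpow (norm_nonneg c) (norm_nonneg _)]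
  rw [tsum_mul_left, Real.mul_rpow (by positivity) (tsum_nonneg fun _ => by positivity),
    ← Real.rpow_mul (norm_nonneg c), mul_one_div_cancel hq.ne', Real.rpow_one]

theorem lp.norm_eq_lpNorm {q : ℝ} (hq : 0 < q) (F : lp (fun _ : ℤ => ℂ) (ENNReal.ofReal q)) :
    ‖F‖ = lpNorm q F := by
  rw [lp.norm_eq_tsum_rpow (by rwa [ENNReal.toReal_ofReal hq.le]), ENNReal.toReal_ofReal hq.le,
    lpNorm]

theorem Memℓp.of_support_finite {q : ENNReal} {f : ℤ → ℂ} (hf : f.support.Finite) : Memℓp f q :=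
  (memℓp_zero hf).of_exponent_ge bot_le

/-- Minkowski's inequality for a pointwise convergent series in `ℓ^q`. -/
theorem lpNorm_le_tsum_of_hasSum {q : ℝ} (hq : 1 ≤ q) {u : ℕ → ℤ → ℂ} {F : ℤ → ℂ}
    (hu : ∀ N, Memℓp (u N) (ENNReal.ofReal q)) (hsum : Summable fun N => lpNorm q (u N))
    (hF : ∀ x, HasSum (fun N => u N x) (F x)) : lpNorm q F ≤ ∑' N, lpNorm q (u N) := by
  have : Fact (1 ≤ ENNReal.ofReal q) := ⟨ENNReal.one_le_ofReal.2 hq⟩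
  have hq0 : 0 < q := one_pos.trans_le hq
  let U : ℕ → lp (fun _ : ℤ => ℂ) (ENNReal.ofReal q) := fun N => ⟨u N, hu N⟩
  have hnorm : ∀ N, ‖U N‖ = lpNorm q (u N) := fun N => lp.norm_eq_lpNorm hq0 (U N)
  have hU : HasSum U (∑' N, U N) := (Summable.of_norm (by simpa only [hnorm])).hasSum
  have hF_eq : F = ⇑(∑' N, U N) :=
    funext fun x => (hF x).unique ((lp.evalCLM ℂ _ _ x).hasSum hU)
  rw [hF_eq, ← lp.norm_eq_lpNorm hq0, ← tsum_congr hnorm]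
  exact norm_tsum_le_tsum_norm (by simpa only [hnorm])

theorem finite_support_comp_eval_add_one {P : Polynomial ℤ} (hP : 0 < P.natDegree) {f : ℤ → ℂ}
    (hf : f.support.Finite) (x : ℤ) :
    (Function.support fun k : ℕ => f (x + P.eval ((k : ℤ) + 1))).Finite :=
  ((P.finite_setOf_eval_mem hP (hf.preimage (add_right_injective x).injOn)).preimage
    ((add_left_injective 1).comp Nat.cast_injective).injOn :)

theorem avg_support_finite (P : Polynomial ℤ) (N : ℕ) {f : ℤ → ℂ} (hf : f.support.Finite) :
    (avg P N f).support.Finite := by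
  refine (Function.HasFiniteSupport.sum (fun k => ?_) _).subset
    (Function.support_mul_subset_right _ _)
  exact hf.preimage (add_left_injective _).injOn

theorem avg_eq_sum_range (P : Polynomial ℤ) (N : ℕ) (f : ℤ → ℂ) (x : ℤ) :
    avg P N f x = (N : ℂ)⁻¹ * ∑ k ∈ range N, f (x + P.eval ((k : ℤ) + 1)) := by
  rw [avg]
  congr 1
  refine Finset.sum_nbij' (fun j => (j - 1).toNat) (fun k => (k : ℤ) + 1) ?_ ?_ ?_ ?_ ?_
  all_goals intro j hj; simp only [Finset.mem_Icc, Finset.mem_range] at hj ⊢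
  any_goals omega
  rw [show ((j - 1).toNat : ℤ) + 1 = j by omega]

noncomputable def fracKernel (lam : ℝ) (k : ℕ) : ℝ := ((k : ℝ) + 1) ^ (-lam)

theorem fracKernel_antitone {lam : ℝ} (hlam : 0 ≤ lam) : Antitone (fracKernel lam) :=
  fun _ _ h => Real.rpow_le_rpow_of_nonpos (by positivity) (by gcongr) (by linarith)

theorem tendsto_fracKernel {lam : ℝ} (hlam : 0 < lam) :
    Tendsto (fracKernel lam) atTop (𝓝 0) :=
  (tendsto_rpow_neg_atTop hlam).comp
    (tendsto_atTop_add_const_right _ 1 tendsto_natCast_atTop_atTop)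

noncomputable def avgWeight (lam : ℝ) (N : ℕ) : ℝ :=
  ((N : ℝ) + 1) * (fracKernel lam N - fracKernel lam (N + 1))

theorem avgWeight_nonneg {lam : ℝ} (hlam : 0 ≤ lam) (N : ℕ) : 0 ≤ avgWeight lam N :=
  mul_nonneg (by positivity) (sub_nonneg.2 (fracKernel_antitone hlam N.le_succ))

theorem avgWeight_le {lam : ℝ} (hlam : 0 ≤ lam) (N : ℕ) :
    avgWeight lam N ≤ lam * ((N : ℝ) + 1) ^ (-lam) := by
  simpa [avgWeight, fracKernel, add_assoc] using
    mul_rpow_neg_sub_rpow_neg_add_one_le hlam (by positivity : (0 : ℝ) < N + 1)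

theorem hasSum_avgWeight_mul_avg {P : Polynomial ℤ} (hP : 0 < P.natDegree) {lam : ℝ}
    (hlam : 0 < lam) {f : ℤ → ℂ} (hf : f.support.Finite) (x : ℤ) :
    HasSum (fun N => (avgWeight lam N : ℂ) * avg P (N + 1) f x) (frac P lam f x) := by
  set c : ℕ → ℂ := fun k => f (x + P.eval ((k : ℤ) + 1))
  have hc : c.support.Finite := finite_support_comp_eval_add_one hP hf x
  have hparts := hasSum_sub_smul_sum_range (fracKernel_antitone hlam.le) (tendsto_fracKernel hlam)
    (c := c) (s := hc.toFinset) (by simp)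
  have hfrac : frac P lam f x = ∑ k ∈ hc.toFinset, fracKernel lam k • c k := by
    rw [frac, tsum_eq_sum (s := hc.toFinset) (fun k hk => by simp_all [c])]
    simp [fracKernel, Complex.real_smul, c]
  rw [hfrac]
  refine hparts.congr_fun fun N => ?_
  rw [avg_eq_sum_range, Complex.real_smul, avgWeight]
  push_cast
  field_simp
  rfl

theorem lpNorm_avgWeight_smul_le {q lam C δ B : ℝ} (hq : 0 < q) (hlam : 0 ≤ lam) (hB : 0 ≤ B)
    {N : ℕ} {g : ℤ → ℂ} (hg : lpNorm q g ≤ C * ((N : ℝ) + 1) ^ (-δ) * B) :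
    lpNorm q ((avgWeight lam N : ℂ) • g) ≤ |C| * lam * B * ((N : ℝ) + 1) ^ (-(lam + δ)) := by
  rw [lpNorm_const_smul hq, Complex.norm_real, Real.norm_of_nonneg (avgWeight_nonneg hlam N)]
  calc avgWeight lam N * lpNorm q g
      ≤ lam * ((N : ℝ) + 1) ^ (-lam) * (|C| * ((N : ℝ) + 1) ^ (-δ) * B) :=
        mul_le_mul (avgWeight_le hlam N) (hg.trans (by gcongr; exact le_abs_self C))
          (lpNorm_nonneg _ _) (by positivity)
    _ = _ := by rw [neg_add, Real.rpow_add (by positivity)]; ring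

theorem stmt_0_general (d : ℕ) (hd : 1 ≤ d) (P : Polynomial ℤ) (hP : P.natDegree = d)
    (p q : ℝ) (hp : 1 ≤ p) (hpq : p ≤ q) (C : ℝ)
    (hA : ∀ N : ℕ, 1 ≤ N → ∀ f : ℤ → ℂ, (Function.support f).Finite →
      lpNorm q (avg P N f) ≤ C * (N : ℝ) ^ (-((d : ℝ) * (1 / p - 1 / q))) * lpNorm p f)
    (lam : ℝ) (h2 : 1 - lam < min 1 ((d : ℝ) * (1 / p - 1 / q))) :
    ∃ C' : ℝ, ∀ f : ℤ → ℂ, (Function.support f).Finite →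
      lpNorm q (frac P lam f) ≤ C' * lpNorm p f := by
  set δ := (d : ℝ) * (1 / p - 1 / q)
  have hlam : 0 < lam := by linarith [h2.trans_le (min_le_left _ _)]
  have hδ : 1 - lam < δ := h2.trans_le (min_le_right _ _)
  have hq : 1 ≤ q := hp.trans hpq
  have hw : Summable fun N : ℕ => ((N : ℝ) + 1) ^ (-(lam + δ)) := by
    simpa using (summable_nat_add_iff 1).2 (Real.summable_nat_rpow.2 (by linarith))
  refine ⟨|C| * lam * ∑' N : ℕ, ((N : ℝ) + 1) ^ (-(lam + δ)), fun f hf => ?_⟩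
  have hterm (N : ℕ) : lpNorm q ((avgWeight lam N : ℂ) • avg P (N + 1) f) ≤
      |C| * lam * lpNorm p f * ((N : ℝ) + 1) ^ (-(lam + δ)) :=
    lpNorm_avgWeight_smul_le (by linarith) hlam.le (lpNorm_nonneg p f)
      (by exact_mod_cast hA (N + 1) (Nat.le_add_left 1 N) f hf)
  have hsum := (hw.mul_left _).of_nonneg_of_le (fun N => lpNorm_nonneg _ _) hterm
  calc lpNorm q (frac P lam f)
      ≤ ∑' N, lpNorm q ((avgWeight lam N : ℂ) • avg P (N + 1) f) :=
        lpNorm_le_tsum_of_hasSum hq (fun N => .of_support_finite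
          ((avg_support_finite P _ hf).subset (Function.support_const_smul_subset _ _)))
          hsum (hasSum_avgWeight_mul_avg (hP ▸ hd) hlam hf)
    _ ≤ ∑' N : ℕ, |C| * lam * lpNorm p f * ((N : ℝ) + 1) ^ (-(lam + δ)) :=
        hsum.tsum_le_tsum hterm (hw.mul_left _)
    _ = _ := by rw [tsum_mul_left]; ring

theorem stmt_0 (d : ℕ) (hd : 1 ≤ d) (P : Polynomial ℤ) (hP : P.natDegree = d)
    (p q : ℝ) (hp : 1 ≤ p) (hpq : p ≤ q) (C : ℝ)
    (hA : ∀ N : ℕ, 1 ≤ N → ∀ f : ℤ → ℂ, (Function.support f).Finite →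
      lpNorm q (avg P N f) ≤ C * (N : ℝ) ^ (-((d : ℝ) * (1 / p - 1 / q))) * lpNorm p f)
    (lam : ℝ) (h1 : 0 < 1 - lam) (h2 : 1 - lam < min 1 ((d : ℝ) * (1 / p - 1 / q))) :
    ∃ C' : ℝ, ∀ f : ℤ → ℂ, (Function.support f).Finite →
      lpNorm q (frac P lam f) ≤ C' * lpNorm p f :=
  stmt_0_general d hd P hP p q hp hpq C hA lam h2
end

section
/- Let P(x) = a x² + b x + c with a ≥ 1 and b, c ≥ 0 integers. For every nonnegative f : ℤ → [0,∞) supported in [-(aN² + bN + b²/(4a)), aN² + bN + b²/(4a)], defining g : ℤ → [0,∞) by g(4am) = f(m) and g(n) = 0 when 4a ∤ n, one has the pointwise inequality A_N^P f(x) ≤ (2a + b/N) · A_{2aN+b}^{Q} g(4a(x+c) - b²) for all x ∈ ℤ, where Q(k) = k². -/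
/-!
Completing the square, `4a·P(n) - b² = (2an + b)²`, shows that the point `x + P(n)` seen by
`A_N^P f` reappears as the point `4a(x + c) - b² + k²`, `k = 2an + b ∈ [1, 2aN + b]`, seen by
`A_{2aN+b}^Q g`. Since `n ↦ 2an + b` is injective and `g ≥ 0`, the sum over `n` is bounded by the
sum over `k`; normalising by `N` and by `2aN + b` produces the factor `(2aN + b)/N = 2a + b/N`.
-/

open Finset

theorem Finset.sum_comp_le_sum_of_injOn {ι κ M : Type*} [AddCommMonoid M] [PartialOrder M]
    [IsOrderedAddMonoid M] [DecidableEq κ] {s : Finset ι} {t : Finset κ} {φ : ι → κ}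
    {g : κ → M} (hφ : Set.InjOn φ s) (hmaps : Set.MapsTo φ s t) (hg : ∀ k ∈ t, 0 ≤ g k) :
    ∑ i ∈ s, g (φ i) ≤ ∑ k ∈ t, g k := by
  rw [← sum_image hφ]
  exact sum_le_sum_of_subset_of_nonneg (image_subset_iff.2 hmaps) fun k hk _ => hg k hk

lemma four_mul_mul_add_sq_eq {R : Type*} [CommRing R] (a b c x n : R) :
    4 * a * (x + c) - b ^ 2 + (2 * a * n + b) ^ 2 = 4 * a * (x + a * n ^ 2 + b * n + c) := by
  ring

lemma nonneg_of_comp_mul_eq {d : ℤ} {f g : ℤ → ℝ} (hf0 : ∀ m, 0 ≤ f m)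
    (hg1 : ∀ m, g (d * m) = f m) (hg2 : ∀ n, ¬ d ∣ n → g n = 0) (n : ℤ) : 0 ≤ g n := by
  by_cases hdvd : d ∣ n
  · obtain ⟨m, rfl⟩ := hdvd
    exact hg1 m ▸ hf0 m
  · exact (hg2 n hdvd).ge

lemma sum_comp_quadratic_le_sum_comp_sq {a b : ℤ} (ha : 1 ≤ a) (hb : 0 ≤ b) (N : ℕ)
    {f g : ℤ → ℝ} (hg0 : ∀ n, 0 ≤ g n) (hg1 : ∀ m, g (4 * a * m) = f m) (x c : ℤ) :
    ∑ n ∈ Icc (1 : ℤ) N, f (x + a * n ^ 2 + b * n + c) ≤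
      ∑ k ∈ Icc (1 : ℤ) (2 * a * N + b), g (4 * a * (x + c) - b ^ 2 + k ^ 2) := by
  have hinj : Set.InjOn (fun n : ℤ => 2 * a * n + b) (Icc (1 : ℤ) N) := fun n _ m _ h =>
    mul_left_cancel₀ (by positivity : 2 * a ≠ 0) (add_right_cancel h)
  have hmaps : Set.MapsTo (fun n : ℤ => 2 * a * n + b) (Icc (1 : ℤ) N)
      (Icc (1 : ℤ) (2 * a * N + b)) := by
    intro n hn
    simp only [coe_Icc, Set.mem_Icc] at hn ⊢
    constructor <;> nlinarith
  calc ∑ n ∈ Icc (1 : ℤ) N, f (x + a * n ^ 2 + b * n + c)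
      = ∑ n ∈ Icc (1 : ℤ) N, g (4 * a * (x + c) - b ^ 2 + (2 * a * n + b) ^ 2) := by
        simp only [four_mul_mul_add_sq_eq, hg1]
    _ ≤ _ := sum_comp_le_sum_of_injOn (g := fun k => g (4 * a * (x + c) - b ^ 2 + k ^ 2))
        hinj hmaps fun k _ => hg0 _

theorem stmt_2_general (a b c : ℤ) (ha : 1 ≤ a) (hb : 0 ≤ b)
    (N : ℕ) (hN : 1 ≤ N)
    (f : ℤ → ℝ) (hf0 : ∀ x, 0 ≤ f x)
    (g : ℤ → ℝ)
    (hg1 : ∀ m : ℤ, g (4 * a * m) = f m)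
    (hg2 : ∀ n : ℤ, ¬ (4 * a ∣ n) → g n = 0) :
    ∀ x : ℤ,
      (N : ℝ)⁻¹ * ∑ n ∈ Finset.Icc (1 : ℤ) (N : ℤ), f (x + a * n ^ 2 + b * n + c) ≤
        (2 * (a : ℝ) + (b : ℝ) / (N : ℝ)) *
          (((2 * a * (N : ℤ) + b : ℤ) : ℝ)⁻¹ *
            ∑ k ∈ Finset.Icc (1 : ℤ) (2 * a * (N : ℤ) + b),
              g (4 * a * (x + c) - b ^ 2 + k ^ 2)) := by
  intro x
  have hNR : (0 : ℝ) < N := by exact_mod_cast hN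
  have hMR : (0 : ℝ) < ((2 * a * N + b : ℤ) : ℝ) := by
    have : (1 : ℤ) ≤ N := by exact_mod_cast hN
    exact_mod_cast (by nlinarith : (0 : ℤ) < 2 * a * N + b)
  have hsum := sum_comp_quadratic_le_sum_comp_sq ha hb N
    (nonneg_of_comp_mul_eq hf0 hg1 hg2) hg1 x c
  calc (N : ℝ)⁻¹ * ∑ n ∈ Icc (1 : ℤ) N, f (x + a * n ^ 2 + b * n + c)
      ≤ (N : ℝ)⁻¹ * ∑ k ∈ Icc (1 : ℤ) (2 * a * N + b), g (4 * a * (x + c) - b ^ 2 + k ^ 2) :=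
        mul_le_mul_of_nonneg_left hsum (inv_nonneg.2 hNR.le)
    _ = _ := by
        push_cast at hMR ⊢
        field_simp

theorem stmt_2 (a b c : ℤ) (ha : 1 ≤ a) (hb : 0 ≤ b) (hc : 0 ≤ c)
    (N : ℕ) (hN : 1 ≤ N)
    (f : ℤ → ℝ) (hf0 : ∀ x, 0 ≤ f x)
    (hsupp : ∀ m : ℤ, f m ≠ 0 →
      |(m : ℝ)| ≤ (a : ℝ) * (N : ℝ) ^ 2 + (b : ℝ) * (N : ℝ) + (b : ℝ) ^ 2 / (4 * (a : ℝ)))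
    (g : ℤ → ℝ)
    (hg1 : ∀ m : ℤ, g (4 * a * m) = f m)
    (hg2 : ∀ n : ℤ, ¬ (4 * a ∣ n) → g n = 0) :
    ∀ x : ℤ,
      (N : ℝ)⁻¹ * ∑ n ∈ Finset.Icc (1 : ℤ) (N : ℤ), f (x + a * n ^ 2 + b * n + c) ≤
        (2 * (a : ℝ) + (b : ℝ) / (N : ℝ)) *
          (((2 * a * (N : ℤ) + b : ℤ) : ℝ)⁻¹ *
            ∑ k ∈ Finset.Icc (1 : ℤ) (2 * a * (N : ℤ) + b),
              g (4 * a * (x + c) - b ^ 2 + k ^ 2)) :=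
  stmt_2_general a b c ha hb N hN f hf0 g hg1 hg2
end

section
/- Let P(x) = a x² + b x + c with a ≥ 1, b, c ≥ 0 integers, and suppose that for some 3/2 < p ≤ 2 there is a constant C_p with ‖A_M^{k²} g‖_{ℓ^{p'}(ℤ)} ≤ C_p M^{-2(1/p - 1/p')} ‖g‖_{ℓ^p(ℤ)} for all M ∈ ℕ and all finitely supported g (the Stein–Wainger estimate for the squares). Then for all N ∈ ℕ and finitely supported f, ‖A_N^P f‖_{ℓ^{p'}(ℤ)} ≤ C_p (2a + b/N)(2aN + b)^{-2(1/p - 1/p')} ‖f‖_{ℓ^p(ℤ)}. -/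
/-! Completing the square, `4a (x + a n² + b n + c) = (4a x + 4a c - b²) + (2a n + b)²`, shows
that after transplanting `|f|` to the multiples of `4a`, the orbit `x + P(n)`, `1 ≤ n ≤ N`, becomes
part of the orbit `y + k²`, `1 ≤ k ≤ M := 2aN + b`, of the point `y = 4a x + 4a c - b²`. The
transplanted function `F` is nonnegative, so enlarging the range of summation only increases the
average: `|A_N^P f(x)| ≤ (M/N) A_M^{k²} F(y)`. Since `x ↦ y` is injective and the transplantation
preserves `ℓ^p` norms, the Stein–Wainger estimate for `A_M^{k²}` transfers with the factor `M/N`. -/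

open Finset

/-- Averaging operator along the squares. -/
noncomputable def sqAvg (M : ℕ) (g : ℤ → ℂ) (x : ℤ) : ℂ :=
  (M : ℂ)⁻¹ * ∑ k ∈ Finset.Icc (1 : ℤ) (M : ℤ), g (x + k ^ 2)

/-- Averaging operator along the quadratic polynomial `a x² + b x + c`. -/
noncomputable def quadAvg (a b c : ℤ) (N : ℕ) (f : ℤ → ℂ) (x : ℤ) : ℂ :=
  (N : ℂ)⁻¹ * ∑ n ∈ Finset.Icc (1 : ℤ) (N : ℤ), f (x + a * n ^ 2 + b * n + c)

open Function

section LpNorm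

variable {q : ℝ}

lemma summable_norm_rpow_of_finite_support (hq : q ≠ 0) {v : ℤ → ℂ} (hv : (support v).Finite) :
    Summable fun x => ‖v x‖ ^ q :=
  summable_of_hasFiniteSupport <| hv.subset fun x hx h0 => hx (by simp [h0, Real.zero_rpow hq])

lemma lpNorm_le_lpNorm_of_norm_le (hq : 0 ≤ q) {u v : ℤ → ℂ} (hv : Summable fun x => ‖v x‖ ^ q)
    (h : ∀ x, ‖u x‖ ≤ ‖v x‖) : lpNorm q u ≤ lpNorm q v := by
  have hle : ∀ x, ‖u x‖ ^ q ≤ ‖v x‖ ^ q := fun x => by gcongr; exact h x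
  exact Real.rpow_le_rpow (tsum_nonneg fun _ => by positivity)
    ((hv.of_nonneg_of_le (fun _ => by positivity) hle).tsum_le_tsum hle hv) (one_div_nonneg.mpr hq)

lemma lpNorm_const_mul (hq : q ≠ 0) (w : ℂ) (v : ℤ → ℂ) :
    lpNorm q (fun x => w * v x) = ‖w‖ * lpNorm q v := by
  unfold lpNorm
  simp_rw [norm_mul, Real.mul_rpow (norm_nonneg _) (norm_nonneg _), tsum_mul_left]
  rw [Real.mul_rpow (by positivity) (tsum_nonneg fun _ => by positivity),
    ← Real.rpow_mul (norm_nonneg _), mul_one_div_cancel hq, Real.rpow_one]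

lemma lpNorm_comp_le (hq : 0 ≤ q) {v : ℤ → ℂ} (hv : Summable fun y => ‖v y‖ ^ q) {z : ℤ → ℤ}
    (hz : Injective z) : lpNorm q (v ∘ z) ≤ lpNorm q v :=
  Real.rpow_le_rpow (tsum_nonneg fun _ => by positivity)
    ((hv.comp_injective hz).tsum_le_tsum_of_inj z hz (fun _ _ => by positivity) (fun _ => le_rfl)
      hv)
    (one_div_nonneg.mpr hq)

lemma lpNorm_le_mul_lpNorm_comp (hq : 0 < q) {u v : ℤ → ℂ} (hv : Summable fun y => ‖v y‖ ^ q)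
    {z : ℤ → ℤ} (hz : Injective z) {C : ℝ} (hC : 0 ≤ C) (h : ∀ x, ‖u x‖ ≤ C * ‖v (z x)‖) :
    lpNorm q u ≤ C * lpNorm q v := by
  have hCv : Summable fun x => ‖(C : ℂ) * v (z x)‖ ^ q := by
    simp_rw [norm_mul, Real.mul_rpow (norm_nonneg _) (norm_nonneg _)]
    exact (hv.comp_injective hz).mul_left _
  calc lpNorm q u ≤ lpNorm q fun x => (C : ℂ) * (v ∘ z) x :=
        lpNorm_le_lpNorm_of_norm_le hq.le hCv fun x => by simpa [abs_of_nonneg hC] using h x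
    _ = C * lpNorm q (v ∘ z) := by
        rw [lpNorm_const_mul hq.ne', Complex.norm_real, Real.norm_of_nonneg hC]
    _ ≤ C * lpNorm q v := by gcongr; exact lpNorm_comp_le hq.le hv hz

lemma lpNorm_ofReal_norm (v : ℤ → ℂ) : lpNorm q (fun x => (‖v x‖ : ℂ)) = lpNorm q v := by
  simp [lpNorm]

lemma lpNorm_extend_zero (hq : q ≠ 0) {z : ℤ → ℤ} (hz : Injective z) (v : ℤ → ℂ) :
    lpNorm q (extend z v 0) = lpNorm q v := by
  have hnorm : (fun y => ‖extend z v 0 y‖ ^ q) = extend z (fun x => ‖v x‖ ^ q) 0 := by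
    ext y
    rw [apply_extend (fun w : ℂ => ‖w‖ ^ q)]
    congr 1
    ext
    simp [Real.zero_rpow hq]
  unfold lpNorm
  rw [hnorm, tsum_extend_zero hz]

end LpNorm

lemma sqAvg_support_finite (M : ℕ) {g : ℤ → ℂ} (hg : (support g).Finite) :
    (support (sqAvg M g)).Finite := by
  refine ((Finset.finite_toSet (Icc (1 : ℤ) M)).biUnion fun k _ => hg.image (· - k ^ 2)).subset
    fun x hx => ?_
  obtain ⟨k, hk, hgk⟩ := Finset.exists_ne_zero_of_sum_ne_zero (right_ne_zero_of_mul hx)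
  exact Set.mem_biUnion hk ⟨x + k ^ 2, hgk, by simp⟩

theorem norm_quadAvg_le_sqAvg {a b : ℤ} (ha : 0 < a) (hb : 0 ≤ b) (c : ℤ) {N M : ℕ} (hN : 0 < N)
    (hM : (M : ℤ) = 2 * a * N + b) {f F : ℤ → ℂ} (hF : ∀ y, ‖f y‖ ≤ ‖F (4 * a * y)‖) (x : ℤ) :
    ‖quadAvg a b c N f x‖ ≤
      (M / N : ℝ) * ‖sqAvg M (fun y => (‖F y‖ : ℂ)) (4 * a * x + 4 * a * c - b ^ 2)‖ := by
  set y := 4 * a * x + 4 * a * c - b ^ 2 with hy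
  have hsq : ‖sqAvg M (fun y => (‖F y‖ : ℂ)) y‖ =
      (M : ℝ)⁻¹ * ∑ k ∈ Icc 1 (M : ℤ), ‖F (y + k ^ 2)‖ := by
    rw [sqAvg, norm_mul, norm_inv, Complex.norm_natCast, ← Complex.ofReal_sum, Complex.norm_real,
      Real.norm_of_nonneg (Finset.sum_nonneg fun _ _ => norm_nonneg _)]
  have hsub : ∑ n ∈ Icc 1 (N : ℤ), ‖F (y + (2 * a * n + b) ^ 2)‖ ≤
      ∑ k ∈ Icc 1 (M : ℤ), ‖F (y + k ^ 2)‖ := by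
    have hinj : Set.InjOn (fun n => 2 * a * n + b) (Icc 1 (N : ℤ)) := fun n _ m _ h => by
      simpa [ha.ne'] using h
    rw [← Finset.sum_image (f := fun k => ‖F (y + k ^ 2)‖) hinj]
    refine Finset.sum_le_sum_of_subset_of_nonneg (fun k hk => ?_) fun _ _ _ => norm_nonneg _
    obtain ⟨n, hn, rfl⟩ := Finset.mem_image.mp hk
    rw [Finset.mem_Icc] at hn ⊢
    constructor <;> nlinarith
  calc ‖quadAvg a b c N f x‖
        ≤ (N : ℝ)⁻¹ * ∑ n ∈ Icc 1 (N : ℤ), ‖f (x + a * n ^ 2 + b * n + c)‖ := by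
        rw [quadAvg, norm_mul, norm_inv, Complex.norm_natCast]
        gcongr
        exact norm_sum_le _ _
    _ ≤ (N : ℝ)⁻¹ * ∑ n ∈ Icc 1 (N : ℤ), ‖F (y + (2 * a * n + b) ^ 2)‖ := by
        gcongr with n
        have hsquare : y + (2 * a * n + b) ^ 2 = 4 * a * (x + a * n ^ 2 + b * n + c) := by
          rw [hy]
          ring
        rw [hsquare]
        exact hF _
    _ ≤ (N : ℝ)⁻¹ * ∑ k ∈ Icc 1 (M : ℤ), ‖F (y + k ^ 2)‖ := by gcongr
    _ = (M / N : ℝ) * ‖sqAvg M (fun y => (‖F y‖ : ℂ)) y‖ := by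
        have hNz : (0 : ℤ) < N := by exact_mod_cast hN
        have hM0 : (M : ℝ) ≠ 0 := by exact_mod_cast (by nlinarith : (M : ℤ) ≠ 0)
        rw [hsq]
        field_simp

theorem stmt_3_general (a b c : ℤ) (ha : 1 ≤ a) (hb : 0 ≤ b)
    (p p' : ℝ) (hp1 : 3 / 2 < p) (hp' : p' = p / (p - 1)) (Cp : ℝ)
    (hSW : ∀ M : ℕ, 1 ≤ M → ∀ g : ℤ → ℂ, (Function.support g).Finite →
      lpNorm p' (sqAvg M g) ≤ Cp * (M : ℝ) ^ (-(2 * (1 / p - 1 / p'))) * lpNorm p g) :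
    ∀ N : ℕ, 1 ≤ N → ∀ f : ℤ → ℂ, (Function.support f).Finite →
      lpNorm p' (quadAvg a b c N f) ≤
        Cp * (2 * (a : ℝ) + (b : ℝ) / (N : ℝ)) *
          (2 * (a : ℝ) * (N : ℝ) + (b : ℝ)) ^ (-(2 * (1 / p - 1 / p'))) * lpNorm p f := by
  intro N hN f hf
  have hp'0 : 0 < p' := hp' ▸ div_pos (by linarith) (by linarith)
  have ha0 : 0 < a := by omega
  obtain ⟨M, hM⟩ : ∃ M : ℕ, (M : ℤ) = 2 * a * N + b := ⟨_, Int.toNat_of_nonneg (by positivity)⟩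
  have hM1 : 1 ≤ M := by zify; rw [hM]; nlinarith
  have hdil : Injective (4 * a * · : ℤ → ℤ) := mul_right_injective₀ (by positivity)
  set F := extend (4 * a * ·) f 0
  set G : ℤ → ℂ := fun y => (‖F y‖ : ℂ)
  have hG : (support G).Finite :=
    (hf.image _).subset fun y hy => support_extend_zero_subset (by simpa [G, F] using hy)
  have hGf : lpNorm p G = lpNorm p f := by
    rw [lpNorm_ofReal_norm, lpNorm_extend_zero (by linarith) hdil]
  have hz : Injective fun x : ℤ => 4 * a * x + 4 * a * c - b ^ 2 :=
    fun x y h => hdil (by linarith [h])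
  have hpt := norm_quadAvg_le_sqAvg ha0 hb c hN hM (F := F)
    fun y => (congrArg norm (hdil.extend_apply f 0 y)).ge
  calc lpNorm p' (quadAvg a b c N f) ≤ (M / N : ℝ) * lpNorm p' (sqAvg M G) :=
        lpNorm_le_mul_lpNorm_comp hp'0
          (summable_norm_rpow_of_finite_support hp'0.ne' (sqAvg_support_finite M hG)) hz
          (by positivity) hpt
    _ ≤ (M / N : ℝ) * (Cp * M ^ (-(2 * (1 / p - 1 / p'))) * lpNorm p f) := by
        gcongr
        exact hGf ▸ hSW M hM1 G hG
    _ = _ := by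
        have hMr : (M : ℝ) = 2 * a * N + b := by exact_mod_cast hM
        rw [hMr]
        field_simp

theorem stmt_3 (a b c : ℤ) (ha : 1 ≤ a) (hb : 0 ≤ b) (hc : 0 ≤ c)
    (p p' : ℝ) (hp1 : 3 / 2 < p) (hp2 : p ≤ 2) (hp' : p' = p / (p - 1)) (Cp : ℝ)
    (hSW : ∀ M : ℕ, 1 ≤ M → ∀ g : ℤ → ℂ, (Function.support g).Finite →
      lpNorm p' (sqAvg M g) ≤ Cp * (M : ℝ) ^ (-(2 * (1 / p - 1 / p'))) * lpNorm p g) :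
    ∀ N : ℕ, 1 ≤ N → ∀ f : ℤ → ℂ, (Function.support f).Finite →
      lpNorm p' (quadAvg a b c N f) ≤
        Cp * (2 * (a : ℝ) + (b : ℝ) / (N : ℝ)) *
          (2 * (a : ℝ) * (N : ℝ) + (b : ℝ)) ^ (-(2 * (1 / p - 1 / p'))) * lpNorm p f :=
  stmt_3_general a b c ha hb p p' hp1 hp' Cp hSW
end

section
/- For the averaging operator A_N along a polynomial P of degree d with positive leading coefficient, taking f = 𝟙_{{P(1), P(2), …, P(N)}} gives ‖A_N f‖_{ℓ^q} / ‖f‖_{ℓ^p} ≥ N^{-1/p}. Consequently, if the improving inequality ‖A_N f‖_{ℓ^q} ≤ C N^{-d(1/p - 1/q)} ‖f‖_{ℓ^p} holds for all N, then d/q ≥ (d-1)/p. -/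
open Finset

/-- ℓ^p norm (finite real exponent) of a real-valued function on ℤ. -/
noncomputable def lpNormR (p : ℝ) (f : ℤ → ℝ) : ℝ :=
  (∑' x : ℤ, |f x| ^ p) ^ (1 / p)

/-- Averaging operator along a polynomial `P`. -/
noncomputable def avgR (P : Polynomial ℤ) (N : ℕ) (f : ℤ → ℝ) (x : ℤ) : ℝ :=
  (N : ℝ)⁻¹ * ∑ k ∈ Finset.Icc (1 : ℤ) (N : ℤ), f (x + P.eval k)

/-! The indicator `f` of `{P(1), …, P(N)}` has `‖f‖_p ≤ N ^ (1/p)`, while `A_N f (0) = 1`, so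
`‖A_N f‖_q ≥ 1`. This gives the lower bound `N ^ (-1/p)`; compared with the improving bound
`C N ^ (-d (1/p - 1/q))` for all `N`, it forces `-1/p ≤ -d (1/p - 1/q)`. -/

section lpNormR

variable {p : ℝ}

lemma abs_le_lpNormR (hp : 0 < p) {f : ℤ → ℝ} (hf : (Function.support f).Finite) (x : ℤ) :
    |f x| ≤ lpNormR p f := by
  have hsupp : (Function.support fun y => |f y| ^ p) ⊆ Function.support f := by
    intro y hy hfy
    simp [hfy, Real.zero_rpow hp.ne'] at hy
  have hsum : Summable fun y => |f y| ^ p := summable_of_hasFiniteSupport (hf.subset hsupp)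
  calc |f x| = (|f x| ^ p) ^ (1 / p) := by
        rw [← Real.rpow_mul (abs_nonneg _), mul_one_div_cancel hp.ne', Real.rpow_one]
    _ ≤ (∑' y, |f y| ^ p) ^ (1 / p) := by
        gcongr
        exact hsum.le_tsum x fun y _ => by positivity

lemma lpNormR_indicator_one (hp : 0 < p) (S : Finset ℤ) :
    lpNormR p ((S : Set ℤ).indicator 1) = (#S : ℝ) ^ (1 / p) := by
  have hterm : ∀ x, |(S : Set ℤ).indicator (1 : ℤ → ℝ) x| ^ p = if x ∈ S then 1 else 0 := by
    intro x
    by_cases hx : x ∈ S <;> simp [hx, Real.zero_rpow hp.ne']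
  rw [lpNormR, tsum_eq_sum (s := S) fun x hx => by rw [hterm, if_neg hx]]
  simp [hterm]

end lpNormR

lemma support_avgR_finite (P : Polynomial ℤ) (N : ℕ) {f : ℤ → ℝ}
    (hf : (Function.support f).Finite) : (Function.support (avgR P N f)).Finite := by
  refine ((Icc (1 : ℤ) N).finite_toSet.biUnion fun k _ =>
    hf.image fun y => y - P.eval k).subset ?_
  intro x hx
  obtain ⟨k, hk, hfk⟩ := exists_ne_zero_of_sum_ne_zero (right_ne_zero_of_mul hx)
  exact Set.mem_biUnion hk ⟨x + P.eval k, hfk, by ring⟩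

section indicatorImageEval

variable (P : Polynomial ℤ) {N : ℕ}

lemma lpNormR_indicator_image_eval_le {p : ℝ} (hp : 0 < p) :
    lpNormR p (((Icc (1 : ℤ) N).image P.eval : Set ℤ).indicator 1) ≤ (N : ℝ) ^ (1 / p) := by
  rw [lpNormR_indicator_one hp]
  gcongr
  exact card_image_le.trans (by simp)

lemma avgR_indicator_image_eval_zero (hN : 1 ≤ N) :
    avgR P N (((Icc (1 : ℤ) N).image P.eval : Set ℤ).indicator 1) 0 = 1 := by
  have hone : ∀ k ∈ Icc (1 : ℤ) N,
      ((Icc (1 : ℤ) N).image P.eval : Set ℤ).indicator (1 : ℤ → ℝ) (0 + P.eval k) = 1 := by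
    intro k hk
    rw [zero_add, Set.indicator_of_mem (by simpa using mem_image_of_mem P.eval hk)]
    rfl
  rw [avgR, sum_congr rfl hone, sum_const, Int.card_Icc, nsmul_one]
  simp [show (N : ℝ) ≠ 0 by positivity]

lemma rpow_neg_mul_lpNormR_indicator_image_eval_le {p q : ℝ} (hp : 0 < p) (hq : 0 < q)
    (hN : 1 ≤ N) :
    (N : ℝ) ^ (-(1 / p)) * lpNormR p (((Icc (1 : ℤ) N).image P.eval : Set ℤ).indicator 1) ≤
      lpNormR q (avgR P N (((Icc (1 : ℤ) N).image P.eval : Set ℤ).indicator 1)) := by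
  have hNpos : (0 : ℝ) < N := by exact_mod_cast hN
  have hfin : (Function.support (((Icc (1 : ℤ) N).image P.eval : Set ℤ).indicator
      (1 : ℤ → ℝ))).Finite :=
    (Set.toFinite _).subset Set.support_indicator_subset
  calc (N : ℝ) ^ (-(1 / p)) * lpNormR p (((Icc (1 : ℤ) N).image P.eval : Set ℤ).indicator 1)
      ≤ (N : ℝ) ^ (-(1 / p)) * (N : ℝ) ^ (1 / p) := by
        gcongr
        exact lpNormR_indicator_image_eval_le P hp
    _ = |avgR P N (((Icc (1 : ℤ) N).image P.eval : Set ℤ).indicator 1) 0| := by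
        rw [← Real.rpow_add hNpos, neg_add_cancel, Real.rpow_zero,
          avgR_indicator_image_eval_zero P hN, abs_one]
    _ ≤ _ := abs_le_lpNormR hq (support_avgR_finite P N hfin) 0

lemma one_le_lpNormR_indicator_image_eval {p : ℝ} (hp : 0 < p) (hN : 1 ≤ N) :
    1 ≤ lpNormR p (((Icc (1 : ℤ) N).image P.eval : Set ℤ).indicator 1) := by
  have hmem : P.eval 1 ∈ (Icc (1 : ℤ) N).image P.eval :=
    mem_image_of_mem _ (by simp [hN])
  have := abs_le_lpNormR hp ((Set.toFinite _).subset Set.support_indicator_subset)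
    (f := ((Icc (1 : ℤ) N).image P.eval : Set ℤ).indicator 1) (P.eval 1)
  rwa [Set.indicator_of_mem (by simpa using hmem), Pi.one_apply, abs_one] at this

end indicatorImageEval

lemma le_of_forall_natCast_rpow_le_mul_rpow {a b C : ℝ}
    (h : ∀ N : ℕ, 1 ≤ N → (N : ℝ) ^ a ≤ C * (N : ℝ) ^ b) : a ≤ b := by
  by_contra! hba
  have hbounded : ∀ N : ℕ, 1 ≤ N → (N : ℝ) ^ (a - b) ≤ C := by
    intro N hN
    have hNpos : (0 : ℝ) < N := by exact_mod_cast hN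
    rw [Real.rpow_sub hNpos, div_le_iff₀ (by positivity)]
    exact h N hN
  have htend : Filter.Tendsto (fun N : ℕ => (N : ℝ) ^ (a - b)) Filter.atTop Filter.atTop :=
    (tendsto_rpow_atTop (sub_pos.mpr hba)).comp tendsto_natCast_atTop_atTop
  obtain ⟨N, hCN, hN⟩ :=
    ((htend.eventually_gt_atTop C).and (Filter.eventually_ge_atTop 1)).exists
  exact (hbounded N hN).not_gt hCN

theorem stmt_4_general (d : ℕ) (P : Polynomial ℤ) (p q : ℝ) (hp : 1 ≤ p) (hq : 1 ≤ q) :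
    -- lower bound with f = indicator of {P(1), …, P(N)}
    (∀ N : ℕ, 1 ≤ N →
      (N : ℝ) ^ (-(1 / p)) *
          lpNormR p (Set.indicator {y : ℤ | ∃ k ∈ Finset.Icc (1 : ℤ) (N : ℤ), P.eval k = y} 1) ≤
        lpNormR q (avgR P N
          (Set.indicator {y : ℤ | ∃ k ∈ Finset.Icc (1 : ℤ) (N : ℤ), P.eval k = y} 1))) ∧
    -- consequence: necessity of d/q ≥ (d-1)/p for the improving inequality
    ((∃ C : ℝ, ∀ N : ℕ, 1 ≤ N → ∀ f : ℤ → ℝ, (Function.support f).Finite →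
        lpNormR q (avgR P N f) ≤ C * (N : ℝ) ^ (-((d : ℝ) * (1 / p - 1 / q))) * lpNormR p f) →
      ((d : ℝ) - 1) / p ≤ (d : ℝ) / q) := by
  have hp0 : 0 < p := by linarith
  have hq0 : 0 < q := by linarith
  have hset : ∀ N : ℕ, {y : ℤ | ∃ k ∈ Icc (1 : ℤ) N, P.eval k = y} =
      ((Icc (1 : ℤ) N).image P.eval : Set ℤ) := fun N => (coe_image).symm
  simp only [hset]
  refine ⟨fun N hN => rpow_neg_mul_lpNormR_indicator_image_eval_le P hp0 hq0 hN, ?_⟩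
  rintro ⟨C, hC⟩
  have hexp : -(1 / p) ≤ -((d : ℝ) * (1 / p - 1 / q)) := by
    refine le_of_forall_natCast_rpow_le_mul_rpow (C := C) fun N hN => le_of_mul_le_mul_right ?_
      (one_pos.trans_le (one_le_lpNormR_indicator_image_eval P hp0 hN))
    exact (rpow_neg_mul_lpNormR_indicator_image_eval_le P hp0 hq0 hN).trans
      (hC N hN _ ((Set.toFinite _).subset Set.support_indicator_subset))
  calc ((d : ℝ) - 1) / p = d * (1 / p) - 1 / p := by ring
    _ ≤ d * (1 / q) := by linarith
    _ = d / q := by ring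

theorem stmt_4 (d : ℕ) (hd : 1 ≤ d) (P : Polynomial ℤ) (hdeg : P.natDegree = d)
    (hlead : 0 < P.leadingCoeff) (p q : ℝ) (hp : 1 ≤ p) (hq : 1 ≤ q) :
    -- lower bound with f = indicator of {P(1), …, P(N)}
    (∀ N : ℕ, 1 ≤ N →
      (N : ℝ) ^ (-(1 / p)) *
          lpNormR p (Set.indicator {y : ℤ | ∃ k ∈ Finset.Icc (1 : ℤ) (N : ℤ), P.eval k = y} 1) ≤
        lpNormR q (avgR P N
          (Set.indicator {y : ℤ | ∃ k ∈ Finset.Icc (1 : ℤ) (N : ℤ), P.eval k = y} 1))) ∧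
    -- consequence: necessity of d/q ≥ (d-1)/p for the improving inequality
    ((∃ C : ℝ, ∀ N : ℕ, 1 ≤ N → ∀ f : ℤ → ℝ, (Function.support f).Finite →
        lpNormR q (avgR P N f) ≤ C * (N : ℝ) ^ (-((d : ℝ) * (1 / p - 1 / q))) * lpNormR p f) →
      ((d : ℝ) - 1) / p ≤ (d : ℝ) / q) :=
  stmt_4_general d P p q hp hq
end

section
/- For the d-dimensional averaging operator à _N and f = 𝟙_{{(0,…,0)}}, one has Ã_N f(-m, -m², …, -m^d) = 1/N for each 1 ≤ m ≤ N, hence ‖Ã_N f‖_{ℓ^q(ℤ^d)} ≥ N^{1/q - 1}. Consequently, if ‖Ã_N f‖_{ℓ^q(ℤ^d)} ≤ C N^{-d(d+1)/2 · (1/p - 1/q)} ‖f‖_{ℓ^p(ℤ^d)} for all N, then (d²+d-2)/q ≥ (d²+d)/p - 2. -/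
open Finset

/-- ℓ^p norm (finite real exponent) of a real-valued function on ℤ^d. -/
noncomputable def lpD (d : ℕ) (p : ℝ) (f : (Fin d → ℤ) → ℝ) : ℝ :=
  (∑' x : Fin d → ℤ, |f x| ^ p) ^ (1 / p)

/-- d-dimensional averaging operator along the moment curve `(k, k², …, k^d)`. -/
noncomputable def avgD (d N : ℕ) (f : (Fin d → ℤ) → ℝ) (x : Fin d → ℤ) : ℝ :=
  (N : ℝ)⁻¹ * ∑ k ∈ Finset.Icc 1 N, f (fun i => x i + (k : ℤ) ^ ((i : ℕ) + 1))

/-! The average `Ã_N δ₀` of the point mass at the origin is `N⁻¹` times the indicator of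
the `N` distinct points `(-m, -m², …, -m^d)`, `1 ≤ m ≤ N`, so its `ℓ^q` norm is exactly
`N^{1/q - 1}`, while `‖δ₀‖_{ℓ^p} = 1`. Feeding `δ₀` into the assumed estimate gives
`N^{1/q - 1} ≤ C N^{-d(d+1)/2 · (1/p - 1/q)}` for all `N`, so the exponents compare, and this
comparison is the claimed inequality. -/

def negMomentCurve (d m : ℕ) : Fin d → ℤ := fun i => -((m : ℤ) ^ ((i : ℕ) + 1))

lemma negMomentCurve_injective {d : ℕ} (hd : 1 ≤ d) : Function.Injective (negMomentCurve d) :=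
  fun a b hab => by simpa [negMomentCurve] using congrFun hab ⟨0, hd⟩

lemma avgD_indicator_zero {d : ℕ} (hd : 1 ≤ d) (N : ℕ) :
    avgD d N (Set.indicator {fun _ => (0 : ℤ)} 1) =
      ((Icc 1 N).image (negMomentCurve d) : Set (Fin d → ℤ)).indicator
        fun _ => (N : ℝ)⁻¹ := by
  funext x
  have hterm : ∀ k : ℕ, Set.indicator {fun _ => (0 : ℤ)} (1 : (Fin d → ℤ) → ℝ)
      (fun i => x i + (k : ℤ) ^ ((i : ℕ) + 1)) = if negMomentCurve d k = x then 1 else 0 := by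
    intro k
    simp only [Set.indicator_apply, Set.mem_singleton_iff, Pi.one_apply, funext_iff,
      negMomentCurve, neg_eq_iff_add_eq_zero, add_comm]
  simp only [avgD, hterm]
  by_cases hx : x ∈ (Icc 1 N).image (negMomentCurve d)
  · obtain ⟨m, hm, rfl⟩ := Finset.mem_image.1 hx
    rw [Set.indicator_of_mem (Finset.mem_coe.2 hx)]
    simp [(negMomentCurve_injective hd).eq_iff, hm]
  · rw [Set.indicator_of_notMem (by simpa using hx), Finset.sum_eq_zero, mul_zero]
    intro k hk
    exact if_neg fun h => hx (Finset.mem_image.2 ⟨k, hk, h⟩)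

lemma lpD_indicator_const {d : ℕ} {q : ℝ} (hq : q ≠ 0) (s : Finset (Fin d → ℤ))
    (c : ℝ) :
    lpD d q ((s : Set (Fin d → ℤ)).indicator fun _ => c) = |c| * (#s : ℝ) ^ (1 / q) := by
  have htsum : ∑' x, |(s : Set (Fin d → ℤ)).indicator (fun _ => c) x| ^ q = #s * |c| ^ q := by
    rw [tsum_eq_sum (s := s) fun x hx => by
      simp [Set.indicator_of_notMem (mt Finset.mem_coe.1 hx), Real.zero_rpow hq]]
    rw [Finset.sum_congr rfl fun x hx => by rw [Set.indicator_of_mem (Finset.mem_coe.2 hx)],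
      Finset.sum_const, nsmul_eq_mul]
  rw [lpD, htsum, Real.mul_rpow (by positivity) (by positivity), one_div,
    Real.rpow_rpow_inv (abs_nonneg c) hq, mul_comm]

lemma lpD_avgD_indicator_zero {d N : ℕ} {q : ℝ} (hd : 1 ≤ d) (hN : 1 ≤ N) (hq : q ≠ 0) :
    lpD d q (avgD d N (Set.indicator {fun _ => (0 : ℤ)} 1)) = (N : ℝ) ^ (1 / q - 1) := by
  have hNpos : (0 : ℝ) < N := by exact_mod_cast hN
  rw [avgD_indicator_zero hd, lpD_indicator_const hq,
    card_image_of_injective _ (negMomentCurve_injective hd), Nat.card_Icc, Nat.add_sub_cancel,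
    abs_of_pos (inv_pos.2 hNpos), Real.rpow_sub_one hNpos.ne', inv_mul_eq_div]

lemma lpD_indicator_zero {d : ℕ} {p : ℝ} (hp : p ≠ 0) :
    lpD d p (Set.indicator {fun _ => (0 : ℤ)} 1) = 1 := by
  simpa using lpD_indicator_const hp {fun _ => (0 : ℤ)} 1

theorem stmt_7 (d : ℕ) (hd : 1 ≤ d) (p q : ℝ) (hp : 1 ≤ p) (hq : 1 ≤ q) :
    (∀ N : ℕ, 1 ≤ N →
      (∀ m : ℕ, m ∈ Finset.Icc 1 N →
        avgD d N (Set.indicator {fun _ => (0 : ℤ)} 1)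
            (fun i => -((m : ℤ) ^ ((i : ℕ) + 1))) = (N : ℝ)⁻¹) ∧
      (N : ℝ) ^ (1 / q - 1) ≤ lpD d q (avgD d N (Set.indicator {fun _ => (0 : ℤ)} 1))) ∧
    ((∃ C : ℝ, ∀ N : ℕ, 1 ≤ N → ∀ f : (Fin d → ℤ) → ℝ, (Function.support f).Finite →
        lpD d q (avgD d N f) ≤
          C * (N : ℝ) ^ (-((d : ℝ) * ((d : ℝ) + 1) / 2 * (1 / p - 1 / q))) * lpD d p f) →
      ((d : ℝ) ^ 2 + (d : ℝ)) / p - 2 ≤ ((d : ℝ) ^ 2 + (d : ℝ) - 2) / q) := by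
  have hq0 : q ≠ 0 := by positivity
  refine ⟨fun N hN => ⟨fun m hm => ?_, (lpD_avgD_indicator_zero hd hN hq0).ge⟩,
    fun ⟨C, hC⟩ => ?_⟩
  · rw [avgD_indicator_zero hd]
    exact Set.indicator_of_mem (Finset.mem_coe.2 (Finset.mem_image_of_mem _ hm)) _
  · have hexp := le_of_forall_natCast_rpow_le_mul_rpow fun N hN => by
      have hest := hC N hN (Set.indicator {fun _ => (0 : ℤ)} 1)
        ((Set.finite_singleton _).subset Set.support_indicator_subset)
      rwa [lpD_avgD_indicator_zero hd hN hq0, lpD_indicator_zero (by positivity), mul_one]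
        at hest
    rw [div_eq_mul_one_div _ p, div_eq_mul_one_div _ q]
    linear_combination 2 * hexp
end

section
/- Suppose d ≥ 3 and the d-dimensional improving estimate ‖Ã_N F‖_{ℓ^q(ℤ^d)} ≤ C N^{-d(d+1)/2·(1/p - 1/q)} ‖F‖_{ℓ^p(ℤ^d)} holds for all N and finitely supported F. Then for the one-dimensional fractional integral Ĩ_{d,λ} with 0 < 1 - λ < d(d+1)/2 · (1/p - 1/q), one has ‖Ĩ_{d,λ} F‖_{ℓ^q(ℤ^d)} ≤ C' ‖F‖_{ℓ^p(ℤ^d)} with C' depending only on C, λ, d, p, q. -/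
open Finset

/-- d-dimensional fractional integral along the moment curve. -/
noncomputable def fracD (d : ℕ) (lam : ℝ) (f : (Fin d → ℤ) → ℝ) (x : Fin d → ℤ) : ℝ :=
  ∑' k : ℕ, ((k : ℝ) + 1) ^ (-lam) * f (fun i => x i + ((k : ℤ) + 1) ^ ((i : ℕ) + 1))

/-!
Split the sum over `k` into the dyadic blocks `2 ^ j ≤ k < 2 ^ (j + 1)`. On the `j`-th block the
weight `k ^ (-λ)` is at most `2 ^ (-jλ)`, so for `F ≥ 0` the block is dominated pointwise by
`2 ^ (-jλ) · 2 ^ (j + 1) · Ã_{2 ^ (j + 1)} F`. The averaging estimate then bounds its `ℓ^q` norm by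
a constant times `2 ^ (j (1 - λ - α)) ‖F‖_p`, where `α = d (d + 1) / 2 · (1 / p - 1 / q)`. Since
`1 - λ < α` these bounds form a convergent geometric series, and Minkowski's inequality in `ℓ^q`
(`q ≥ 1`) adds up the blocks.
-/

open Filter Function

lemma summable_abs_rpow_of_hasFiniteSupport {ι : Type*} {f : ι → ℝ} (hf : f.HasFiniteSupport)
    {q : ℝ} (hq : 0 < q) : Summable fun x => |f x| ^ q :=
  summable_of_hasFiniteSupport (hf.fun_comp (g := fun t : ℝ => |t| ^ q) (by simp [hq.ne']))

lemma abs_rpow_le_abs_rpow_of_le {ι : Type*} {f g : ι → ℝ} {q : ℝ} (hq : 0 ≤ q) (hf : 0 ≤ f)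
    (hfg : f ≤ g) (x : ι) : |f x| ^ q ≤ |g x| ^ q :=
  Real.rpow_le_rpow (abs_nonneg _) (abs_le_abs_of_nonneg (hf x) (hfg x)) hq

lemma summable_abs_rpow_of_le {ι : Type*} {f g : ι → ℝ} {q : ℝ} (hq : 0 ≤ q) (hf : 0 ≤ f)
    (hfg : f ≤ g) (hg : Summable fun x => |g x| ^ q) : Summable fun x => |f x| ^ q :=
  hg.of_nonneg_of_le (fun _ => by positivity) (abs_rpow_le_abs_rpow_of_le hq hf hfg)

theorem hasSum_sum_Ico_of_nonneg {f : ℕ → ℝ} (hf : 0 ≤ f) {a : ℝ} (ha : HasSum f a)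
    {b : ℕ → ℕ} (hb : Monotone b) (hb0 : b 0 = 0) (hbt : Tendsto b atTop atTop) :
    HasSum (fun j => ∑ k ∈ Ico (b j) (b (j + 1)), f k) a := by
  have partial_sum (n : ℕ) :
      ∑ j ∈ range n, ∑ k ∈ Ico (b j) (b (j + 1)), f k = ∑ k ∈ range (b n), f k := by
    induction n with
    | zero => simp [hb0]
    | succ n ih =>
      rw [sum_range_succ, ih, range_eq_Ico, range_eq_Ico,
        sum_Ico_consecutive _ (Nat.zero_le _) (hb n.le_succ)]
  rw [hasSum_iff_tendsto_nat_of_nonneg (fun j => sum_nonneg fun k _ => hf k)]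
  simp only [partial_sum]
  exact ((hasSum_iff_tendsto_nat_of_nonneg hf a).1 ha).comp hbt

lemma two_pow_rpow_mul_two_pow_succ_mul_rpow (j : ℕ) (lam a : ℝ) :
    ((2 : ℝ) ^ j) ^ (-lam) * 2 ^ (j + 1) * ((2 : ℝ) ^ (j + 1)) ^ (-a) =
      2 ^ (1 - a) * ((2 : ℝ) ^ (1 - lam - a)) ^ j := by
  simp only [← Real.rpow_natCast, ← Real.rpow_mul zero_le_two, ← Real.rpow_add two_pos]
  congr 1
  push_cast
  ring

section lpD

variable {d : ℕ} {q : ℝ}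

lemma lpD_nonneg (f : (Fin d → ℤ) → ℝ) : 0 ≤ lpD d q f :=
  Real.rpow_nonneg (tsum_nonneg fun _ => by positivity) _

lemma lpD_le_lpD (hq : 0 < q) {f g : (Fin d → ℤ) → ℝ} (hf : 0 ≤ f) (hfg : f ≤ g)
    (hg : Summable fun x => |g x| ^ q) : lpD d q f ≤ lpD d q g :=
  Real.rpow_le_rpow (tsum_nonneg fun _ => by positivity)
    ((summable_abs_rpow_of_le hq.le hf hfg hg).tsum_le_tsum
      (abs_rpow_le_abs_rpow_of_le hq.le hf hfg) hg) (by positivity)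

lemma lpD_const_mul (hq : 0 < q) {c : ℝ} (hc : 0 ≤ c) (f : (Fin d → ℤ) → ℝ) :
    lpD d q (fun x => c * f x) = c * lpD d q f := by
  simp only [lpD, abs_mul, abs_of_nonneg hc, Real.mul_rpow hc (abs_nonneg _), tsum_mul_left]
  rw [Real.mul_rpow (by positivity) (tsum_nonneg fun _ => by positivity),
    ← Real.rpow_mul hc, mul_one_div_cancel hq.ne', Real.rpow_one]

lemma lpD_coe_eq_norm (hq : 0 < q) (f : lp (fun _ : Fin d → ℤ => ℝ) (ENNReal.ofReal q)) :
    lpD d q f = ‖f‖ := by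
  rw [lp.norm_eq_tsum_rpow (by rwa [ENNReal.toReal_ofReal hq.le])]
  simp only [lpD, ENNReal.toReal_ofReal hq.le, Real.norm_eq_abs]

theorem lpD_le_tsum (hq : 1 ≤ q) {ι : Type*} {f : (Fin d → ℤ) → ℝ} {g : ι → (Fin d → ℤ) → ℝ}
    (hg : ∀ j, Summable fun x => |g j x| ^ q) (hsum : Summable fun j => lpD d q (g j))
    (hf : ∀ x, HasSum (fun j => g j x) (f x)) : lpD d q f ≤ ∑' j, lpD d q (g j) := by
  have hq0 : 0 < q := by linarith
  have : Fact (1 ≤ ENNReal.ofReal q) := ⟨ENNReal.one_le_ofReal.2 hq⟩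
  let G (j : ι) : lp (fun _ : Fin d → ℤ => ℝ) (ENNReal.ofReal q) :=
    ⟨g j, memℓp_gen (by simpa [ENNReal.toReal_ofReal hq0.le] using hg j)⟩
  have hG (j : ι) : lpD d q (g j) = ‖G j‖ := lpD_coe_eq_norm hq0 (G j)
  simp only [hG] at hsum ⊢
  obtain ⟨S, hS⟩ := hsum.of_norm
  have hSf : ⇑S = f := funext fun x =>
    (hS.map ((Pi.evalAddMonoidHom _ x).comp (lp.coeFnAddMonoidHom _ _))
      (lp.lipschitzWith_one_eval _ x).continuous).unique (hf x)
  rw [← hSf, lpD_coe_eq_norm hq0, ← hS.tsum_eq]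
  exact norm_tsum_le_tsum_norm hsum

end lpD

section fracBlock

variable {d : ℕ} {p q lam : ℝ} {F : (Fin d → ℤ) → ℝ}

lemma hasFiniteSupport_avgD (hF : F.HasFiniteSupport) (N : ℕ) : (avgD d N F).HasFiniteSupport :=
  (HasFiniteSupport.sum (fun _ => hF.comp_of_injective (add_left_injective _)) _).fun_mul_right _

lemma natCast_mul_avgD (N : ℕ) (x : Fin d → ℤ) :
    (N : ℝ) * avgD d N F x = ∑ k ∈ range N, F (fun i => x i + ((k : ℤ) + 1) ^ ((i : ℕ) + 1)) := by
  rcases N.eq_zero_or_pos with rfl | hN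
  · simp
  rw [avgD, ← mul_assoc, mul_inv_cancel₀ (by positivity), one_mul, ← Ico_add_one_right_eq_Icc,
    sum_Ico_eq_sum_range]
  simp [add_comm]

/-- The `j`-th dyadic block of `fracD`; as there, the summation index is shifted by one, so it
covers `2 ^ j ≤ k + 1 < 2 ^ (j + 1)`. -/
noncomputable def fracBlock (d : ℕ) (lam : ℝ) (F : (Fin d → ℤ) → ℝ) (j : ℕ) (x : Fin d → ℤ) : ℝ :=
  ∑ k ∈ Ico (2 ^ j - 1 : ℕ) (2 ^ (j + 1) - 1),
    ((k : ℝ) + 1) ^ (-lam) * F (fun i => x i + ((k : ℤ) + 1) ^ ((i : ℕ) + 1))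

lemma fracBlock_nonneg (hF0 : 0 ≤ F) (j : ℕ) : 0 ≤ fracBlock d lam F j :=
  fun _ => sum_nonneg fun _ _ => mul_nonneg (by positivity) (hF0 _)

lemma hasSum_fracBlock (hd : 0 < d) (hF : F.HasFiniteSupport) (hF0 : 0 ≤ F) (x : Fin d → ℤ) :
    HasSum (fun j => fracBlock d lam F j x) (fracD d lam F x) := by
  have hinj : Injective fun k : ℕ => fun i : Fin d => x i + ((k : ℤ) + 1) ^ ((i : ℕ) + 1) :=
    fun k l hkl => by simpa using congrFun hkl ⟨0, hd⟩
  have hterms : HasSum (fun k : ℕ =>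
      ((k : ℝ) + 1) ^ (-lam) * F (fun i => x i + ((k : ℤ) + 1) ^ ((i : ℕ) + 1))) (fracD d lam F x) :=
    (summable_of_hasFiniteSupport ((hF.comp_of_injective hinj).fun_mul_right _)).hasSum
  exact hasSum_sum_Ico_of_nonneg (fun k => mul_nonneg (by positivity) (hF0 _)) hterms
    (fun m n h => Nat.sub_le_sub_right (Nat.pow_le_pow_right two_pos h) 1) (by simp)
    (tendsto_atTop_mono (fun n => Nat.le_sub_one_of_lt n.lt_two_pow_self) tendsto_id)

lemma fracBlock_le (hF0 : 0 ≤ F) (hlam : 0 ≤ lam) (j : ℕ) :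
    fracBlock d lam F j ≤
      fun x => ((2 : ℝ) ^ j) ^ (-lam) * 2 ^ (j + 1) * avgD d (2 ^ (j + 1)) F x := by
  intro x
  have hweight : ∀ k ∈ Ico (2 ^ j - 1 : ℕ) (2 ^ (j + 1) - 1),
      ((k : ℝ) + 1) ^ (-lam) ≤ ((2 : ℝ) ^ j) ^ (-lam) := by
    intro k hk
    refine Real.rpow_le_rpow_of_nonpos (by positivity) ?_ (neg_nonpos.2 hlam)
    have : 2 ^ j ≤ k + 1 := by
      have := (mem_Ico.1 hk).1
      have := Nat.one_le_two_pow (n := j)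
      omega
    exact_mod_cast this
  have hsub : Ico (2 ^ j - 1 : ℕ) (2 ^ (j + 1) - 1) ⊆ range (2 ^ (j + 1)) := fun k hk => by
    simp only [mem_Ico, mem_range] at hk ⊢
    omega
  calc fracBlock d lam F j x
      ≤ ∑ k ∈ Ico (2 ^ j - 1 : ℕ) (2 ^ (j + 1) - 1),
          ((2 : ℝ) ^ j) ^ (-lam) * F (fun i => x i + ((k : ℤ) + 1) ^ ((i : ℕ) + 1)) :=
        sum_le_sum fun k hk => mul_le_mul_of_nonneg_right (hweight k hk) (hF0 _)
    _ ≤ ((2 : ℝ) ^ j) ^ (-lam) *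
          ∑ k ∈ range (2 ^ (j + 1)), F (fun i => x i + ((k : ℤ) + 1) ^ ((i : ℕ) + 1)) := by
        rw [← mul_sum]
        exact mul_le_mul_of_nonneg_left
          (sum_le_sum_of_subset_of_nonneg hsub fun _ _ _ => hF0 _) (by positivity)
    _ = ((2 : ℝ) ^ j) ^ (-lam) * 2 ^ (j + 1) * avgD d (2 ^ (j + 1)) F x := by
        rw [mul_assoc, ← natCast_mul_avgD, Nat.cast_pow, Nat.cast_ofNat]

lemma summable_abs_rpow_fracBlock (hq : 0 < q) (hF : F.HasFiniteSupport) (hF0 : 0 ≤ F)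
    (hlam : 0 ≤ lam) (j : ℕ) : Summable fun x => |fracBlock d lam F j x| ^ q :=
  summable_abs_rpow_of_le hq.le (fracBlock_nonneg hF0 j) (fracBlock_le hF0 hlam j)
    (summable_abs_rpow_of_hasFiniteSupport ((hasFiniteSupport_avgD hF _).fun_mul_right _) hq)

lemma lpD_fracBlock_le (hq : 0 < q) (hF : F.HasFiniteSupport) (hF0 : 0 ≤ F) (hlam : 0 ≤ lam)
    {C a : ℝ} (j : ℕ)
    (hA : lpD d q (avgD d (2 ^ (j + 1)) F) ≤ C * ((2 ^ (j + 1) : ℕ) : ℝ) ^ (-a) * lpD d p F) :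
    lpD d q (fracBlock d lam F j) ≤ 2 ^ (1 - a) * |C| * lpD d p F * ((2 : ℝ) ^ (1 - lam - a)) ^ j :=
  calc lpD d q (fracBlock d lam F j)
      ≤ lpD d q fun x => ((2 : ℝ) ^ j) ^ (-lam) * 2 ^ (j + 1) * avgD d (2 ^ (j + 1)) F x :=
        lpD_le_lpD hq (fracBlock_nonneg hF0 j) (fracBlock_le hF0 hlam j)
          (summable_abs_rpow_of_hasFiniteSupport ((hasFiniteSupport_avgD hF _).fun_mul_right _) hq)
    _ = ((2 : ℝ) ^ j) ^ (-lam) * 2 ^ (j + 1) * lpD d q (avgD d (2 ^ (j + 1)) F) :=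
        lpD_const_mul hq (by positivity) _
    _ ≤ ((2 : ℝ) ^ j) ^ (-lam) * 2 ^ (j + 1) *
          (|C| * ((2 : ℝ) ^ (j + 1)) ^ (-a) * lpD d p F) := by
        push_cast at hA
        refine mul_le_mul_of_nonneg_left (hA.trans ?_) (by positivity)
        gcongr
        exacts [lpD_nonneg F, le_abs_self C]
    _ = 2 ^ (1 - a) * |C| * lpD d p F * ((2 : ℝ) ^ (1 - lam - a)) ^ j := by
        linear_combination |C| * lpD d p F * two_pow_rpow_mul_two_pow_succ_mul_rpow j lam a

end fracBlock
theorem stmt_13_general (d : ℕ) (hd : 3 ≤ d) (p q : ℝ) (hp : 1 ≤ p) (hpq : p ≤ q) (C : ℝ)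
    (hA : ∀ N : ℕ, 1 ≤ N → ∀ F : (Fin d → ℤ) → ℝ, (Function.support F).Finite →
      (∀ x, 0 ≤ F x) →
      lpD d q (avgD d N F) ≤
        C * (N : ℝ) ^ (-((d : ℝ) * ((d : ℝ) + 1) / 2 * (1 / p - 1 / q))) * lpD d p F)
    (lam : ℝ) (hlam : 0 < lam)
    (h2 : 1 - lam < (d : ℝ) * ((d : ℝ) + 1) / 2 * (1 / p - 1 / q)) :
    ∃ C' : ℝ, ∀ F : (Fin d → ℤ) → ℝ, (Function.support F).Finite → (∀ x, 0 ≤ F x) →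
      lpD d q (fracD d lam F) ≤ C' * lpD d p F := by
  set a := (d : ℝ) * ((d : ℝ) + 1) / 2 * (1 / p - 1 / q)
  set r : ℝ := 2 ^ (1 - lam - a)
  have hr1 : r < 1 := Real.rpow_lt_one_of_one_lt_of_neg one_lt_two (by linarith)
  refine ⟨2 ^ (1 - a) * |C| * (1 - r)⁻¹, fun F hF hF0 => ?_⟩
  have hq : 1 ≤ q := hp.trans hpq
  have hq0 : 0 < q := by linarith
  set K := 2 ^ (1 - a) * |C| * lpD d p F
  have hgeom : Summable fun j => K * r ^ j :=
    (summable_geometric_of_lt_one (by positivity) hr1).mul_left K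
  have hblock (j : ℕ) : lpD d q (fracBlock d lam F j) ≤ K * r ^ j :=
    lpD_fracBlock_le hq0 hF hF0 hlam.le j (hA _ Nat.one_le_two_pow F hF hF0)
  have hsum : Summable fun j => lpD d q (fracBlock d lam F j) :=
    hgeom.of_nonneg_of_le (fun _ => lpD_nonneg _) hblock
  calc lpD d q (fracD d lam F)
      ≤ ∑' j, lpD d q (fracBlock d lam F j) :=
        lpD_le_tsum hq (summable_abs_rpow_fracBlock hq0 hF hF0 hlam.le) hsum
          (hasSum_fracBlock (by omega) hF hF0)
    _ ≤ ∑' j, K * r ^ j := hsum.tsum_le_tsum hblock hgeom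
    _ = 2 ^ (1 - a) * |C| * (1 - r)⁻¹ * lpD d p F := by
        rw [tsum_mul_left, tsum_geometric_of_lt_one (by positivity) hr1]
        ring

theorem stmt_13 (d : ℕ) (hd : 3 ≤ d) (p q : ℝ) (hp : 1 ≤ p) (hpq : p ≤ q) (C : ℝ)
    (hA : ∀ N : ℕ, 1 ≤ N → ∀ F : (Fin d → ℤ) → ℝ, (Function.support F).Finite →
      (∀ x, 0 ≤ F x) →
      lpD d q (avgD d N F) ≤
        C * (N : ℝ) ^ (-((d : ℝ) * ((d : ℝ) + 1) / 2 * (1 / p - 1 / q))) * lpD d p F)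
    (lam : ℝ) (hlam : 0 < lam) (hlam1 : lam < 1)
    (h1 : 0 < 1 - lam) (h2 : 1 - lam < (d : ℝ) * ((d : ℝ) + 1) / 2 * (1 / p - 1 / q)) :
    ∃ C' : ℝ, ∀ F : (Fin d → ℤ) → ℝ, (Function.support F).Finite → (∀ x, 0 ≤ F x) →
      lpD d q (fracD d lam F) ≤ C' * lpD d p F :=
  stmt_13_general d hd p q hp hpq C hA lam hlam h2
end
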